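/- arXiv:2507.16348 — 2 statements merged into one kernel-verified Lean document; each statement's English description precedes it below -/
import Mathlib

section
/- The prize schedule d^∞ is asymptotically optimal: lim_{n→∞} ( sup_{d ∈ D} W(d) − W(d^∞) ) = 0, where the supremum, W, D and d^∞ are all taken for the tournament with n players. -/
open MeasureTheory Finset

/-- The function `a(z; d)` from the tournament model. -/
noncomputable def aFun (n : ℕ) (d : ℕ → ℝ) (z : ℝ) : ℝ :=
  ∑ r ∈ Finset.Icc 1 (n - 1),
    (r : ℝ) * ((n - 1).choose r : ℝ) * z ^ (n - r - 1) * (1 - z) ^ (r - 1) * d r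

/-- The feasible set `D` of prize-differential vectors. -/
def feasible (n : ℕ) (d : ℕ → ℝ) : Prop :=
  (∀ r ∈ Finset.Icc 1 (n - 1), 0 ≤ d r) ∧
    ∑ r ∈ Finset.Icc 1 (n - 1), (r : ℝ) * d r = 1

/-- The objective `W(d) = ∫₀¹ log a(z; d) dz`. -/
noncomputable def W (n : ℕ) (d : ℕ → ℝ) : ℝ :=
  ∫ z in (0:ℝ)..1, Real.log (aFun n d z)

/-- The asymptotic prize-differential schedule `d^∞_r = 1 / ((n-1) r)`. -/
noncomputable def dInfty (n : ℕ) : ℕ → ℝ :=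
  fun r => 1 / (((n : ℝ) - 1) * (r : ℝ))


section Aux

open intervalIntegral Real

lemma betaNat (b a : ℕ) :
    ∫ z in (0:ℝ)..1, z ^ a * (1 - z) ^ b
      = (a.factorial * b.factorial : ℝ) / (a + b + 1).factorial := by
  induction b generalizing a with
  | zero =>
    simp only [pow_zero, mul_one, integral_pow]
    rw [show a + 0 + 1 = a + 1 from rfl, Nat.factorial_succ]
    push_cast
    rw [one_pow, zero_pow (by positivity)]
    have : (0:ℝ) < (a:ℝ) + 1 := by positivity
    have h2 : (0:ℝ) < (a.factorial : ℝ) := by positivity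
    field_simp
    norm_num
  | succ b ih =>
    have hcont : ∀ p q : ℕ, IntervalIntegrable (fun z : ℝ => z ^ p * (1 - z) ^ q)
        MeasureTheory.volume 0 1 := by
      intro p q
      exact (by fun_prop : Continuous fun z : ℝ => z ^ p * (1 - z) ^ q).intervalIntegrable 0 1
    have key : ∫ z in (0:ℝ)..1,
        ((a + 1 : ℝ) * (z ^ a * (1 - z) ^ (b + 1)) - (b + 1 : ℝ) * (z ^ (a + 1) * (1 - z) ^ b))
        = 0 := by
      have hderiv : ∀ z ∈ Set.uIcc (0:ℝ) 1,
          HasDerivAt (fun z : ℝ => z ^ (a + 1) * (1 - z) ^ (b + 1))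
            ((a + 1 : ℝ) * (z ^ a * (1 - z) ^ (b + 1)) - (b + 1 : ℝ) * (z ^ (a + 1) * (1 - z) ^ b))
            z := by
        intro z _
        have h1 : HasDerivAt (fun z : ℝ => z ^ (a + 1)) ((a + 1 : ℝ) * z ^ a) z := by
          simpa using hasDerivAt_pow (a + 1) z
        have h2 : HasDerivAt (fun z : ℝ => (1 - z) ^ (b + 1))
            (((b + 1 : ℝ) * (1 - z) ^ b) * (-1)) z := by
          have hin : HasDerivAt (fun z : ℝ => 1 - z) (-1) z := by
            simpa using (hasDerivAt_id z).const_sub 1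
          have h3 : HasDerivAt (fun y : ℝ => y ^ (b + 1)) ((b + 1 : ℝ) * (1 - z) ^ b) (1 - z) := by
            simpa using hasDerivAt_pow (b + 1) (1 - z)
          exact h3.comp z hin
        have := h1.fun_mul h2
        refine this.congr_deriv ?_
        ring
      have hint : IntervalIntegrable (fun z : ℝ =>
          (a + 1 : ℝ) * (z ^ a * (1 - z) ^ (b + 1)) - (b + 1 : ℝ) * (z ^ (a + 1) * (1 - z) ^ b))
          MeasureTheory.volume 0 1 :=
        ((hcont a (b+1)).const_mul _).sub ((hcont (a+1) b).const_mul _)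
      rw [integral_eq_sub_of_hasDerivAt hderiv hint]
      norm_num
    rw [integral_sub ((hcont a (b+1)).const_mul _) ((hcont (a+1) b).const_mul _),
      intervalIntegral.integral_const_mul, intervalIntegral.integral_const_mul, ih (a + 1)] at key
    have h1 : (0:ℝ) < (a:ℝ) + 1 := by positivity
    have heq : (∫ z in (0:ℝ)..1, z ^ a * (1 - z) ^ (b + 1))
        = ((b:ℝ) + 1) * ((((a+1).factorial : ℝ) * (b.factorial : ℝ)) / ((a + 1 + b + 1).factorial : ℝ)) / ((a:ℝ) + 1) := by
      field_simp at key ⊢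
      linarith
    rw [heq]
    have hfact : ((a + 1 + b + 1).factorial : ℝ) = ((a + (b+1) + 1).factorial : ℝ) := by
      norm_num; ring_nf
    rw [hfact]
    rw [Nat.factorial_succ (a), Nat.factorial_succ (b)]
    push_cast
    have h2 : (0:ℝ) < ((a + (b+1) + 1).factorial : ℝ) := by positivity
    field_simp

lemma log_intervalIntegrable : IntervalIntegrable Real.log MeasureTheory.volume 0 1 := by
  have hcont : ContinuousOn (fun z : ℝ => z - z * Real.log z) (Set.uIcc (0:ℝ) 1) :=
    (continuous_id.sub continuous_mul_log).continuousOn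
  have hderiv : ∀ x ∈ Set.Ioo (min (0:ℝ) 1) (max (0:ℝ) 1),
      HasDerivAt (fun z : ℝ => z - z * Real.log z) (-Real.log x) x := by
    intro x hx
    rw [min_def, max_def] at hx
    norm_num at hx
    have h1 : HasDerivAt (fun z : ℝ => z * Real.log z) (Real.log x + 1) x :=
      Real.hasDerivAt_mul_log (ne_of_gt hx.1)
    have := (hasDerivAt_id x).fun_sub h1
    refine this.congr_deriv ?_
    ring
  have hpos : ∀ x ∈ Set.Ioo (min (0:ℝ) 1) (max (0:ℝ) 1), 0 ≤ -Real.log x := by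
    intro x hx
    rw [min_def, max_def] at hx
    norm_num at hx
    simpa using Real.log_nonpos (le_of_lt hx.1) (le_of_lt hx.2)
  have h := (intervalIntegrable_deriv_of_nonneg hcont hderiv hpos).neg
  have heq : (fun x : ℝ => -(-Real.log x)) = Real.log := by funext x; ring
  rwa [show (-fun x : ℝ => -Real.log x) = fun x : ℝ => -(-Real.log x) from rfl, heq] at h

lemma integral_log_zero_one : ∫ z in (0:ℝ)..1, Real.log z = -1 := by
  have hcont : ContinuousOn (fun z : ℝ => z * Real.log z - z) (Set.Icc (0:ℝ) 1) :=
    (continuous_mul_log.sub continuous_id).continuousOn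
  have hderiv : ∀ x ∈ Set.Ioo (0:ℝ) 1,
      HasDerivAt (fun z : ℝ => z * Real.log z - z) (Real.log x) x := by
    intro x hx
    have h1 : HasDerivAt (fun z : ℝ => z * Real.log z) (Real.log x + 1) x :=
      Real.hasDerivAt_mul_log (ne_of_gt hx.1)
    have := h1.fun_sub (hasDerivAt_id x)
    refine this.congr_deriv ?_
    ring
  rw [integral_eq_sub_of_hasDerivAt_of_le zero_le_one hcont hderiv log_intervalIntegrable]
  norm_num

lemma log_one_sub_intervalIntegrable :
    IntervalIntegrable (fun z : ℝ => Real.log (1 - z)) MeasureTheory.volume 0 1 := by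
  have := log_intervalIntegrable.comp_sub_left 1
  norm_num at this
  exact this.symm

lemma integral_log_one_sub : ∫ z in (0:ℝ)..1, Real.log (1 - z) = -1 := by
  rw [intervalIntegral.integral_comp_sub_left (fun x => Real.log x) 1]
  norm_num

lemma integral_log_one_sub_partial {s : ℝ} (hs : 0 < s) (hs1 : s ≤ 1) :
    ∫ z in (0:ℝ)..(1 - s), Real.log (1 - z) = -1 - s * Real.log s + s := by
  rw [intervalIntegral.integral_comp_sub_left (fun x => Real.log x) 1]
  norm_num
  ring

lemma sum_id (m : ℕ) (z : ℝ) :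
    ∑ r ∈ Icc 1 m, (m.choose r : ℝ) * z ^ (m - r) * (1 - z) ^ (r - 1)
      = ∑ k ∈ range m, z ^ k := by
  rcases eq_or_ne z 1 with rfl | hz
  · rw [Finset.sum_eq_single 1]
    · rcases Nat.eq_zero_or_pos m with rfl | hm
      · simp
      · simp [Nat.choose_one_right, hm]
    · intro r hr hr1
      have h1 : 1 ≤ r := (Finset.mem_Icc.mp hr).1
      have : 1 ≤ r - 1 := by omega
      simp [sub_self, zero_pow (by omega : r - 1 ≠ 0)]
    · intro h
      rcases Nat.eq_zero_or_pos m with rfl | hm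
      · simp
      · exact absurd (Finset.mem_Icc.mpr ⟨le_refl 1, hm⟩) h
  · have hz' : z - 1 ≠ 0 := sub_ne_zero.mpr hz
    apply mul_right_cancel₀ hz'
    rw [geom_sum_mul]
    have expand : (∑ r ∈ Icc 1 m, (m.choose r : ℝ) * z ^ (m - r) * (1 - z) ^ (r - 1)) * (z - 1)
        = -∑ r ∈ Icc 1 m, (m.choose r : ℝ) * z ^ (m - r) * (1 - z) ^ r := by
      rw [Finset.sum_mul, ← Finset.sum_neg_distrib]
      apply Finset.sum_congr rfl
      intro r hr
      have h1 : 1 ≤ r := (Finset.mem_Icc.mp hr).1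
      have : (1 - z) ^ r = (1 - z) ^ (r - 1) * (1 - z) := by
        rw [← pow_succ]
        congr 1
        omega
      rw [this]
      ring
    rw [expand]
    have hbin : ∑ r ∈ range (m + 1), (m.choose r : ℝ) * z ^ (m - r) * (1 - z) ^ r = 1 := by
      have h := add_pow ((1:ℝ) - z) z m
      rw [sub_add_cancel, one_pow] at h
      calc ∑ r ∈ range (m + 1), (m.choose r : ℝ) * z ^ (m - r) * (1 - z) ^ r
          = ∑ r ∈ range (m + 1), (1 - z) ^ r * z ^ (m - r) * (m.choose r : ℝ) := by
            apply Finset.sum_congr rfl; intro r hr; ring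
        _ = 1 := h.symm
    have hsplit : range (m + 1) = insert 0 (Icc 1 m) := by
      ext x
      simp [Finset.mem_range, Finset.mem_Icc, Finset.mem_insert]
      omega
    rw [hsplit, Finset.sum_insert (by simp)] at hbin
    simp only [Nat.choose_zero_right, Nat.cast_one, Nat.sub_zero, pow_zero, one_mul, mul_one] at hbin
    have : ∑ r ∈ Icc 1 m, (m.choose r : ℝ) * z ^ (m - r) * (1 - z) ^ r = 1 - z ^ m := by
      linarith
    rw [this]
    ring

lemma aFun_dInfty {n : ℕ} (hn : 2 ≤ n) (z : ℝ) :
    aFun n (dInfty n) z = (∑ k ∈ range (n - 1), z ^ k) / ((n : ℝ) - 1) := by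
  have hM : ((n:ℝ) - 1) = ((n - 1 : ℕ) : ℝ) := by
    push_cast [Nat.cast_sub (by omega : 1 ≤ n)]; ring
  have hMpos : (0:ℝ) < ((n - 1 : ℕ) : ℝ) := by
    have : 1 ≤ n - 1 := by omega
    exact_mod_cast Nat.lt_of_lt_of_le Nat.zero_lt_one this
  rw [aFun, ← sum_id (n-1) z, Finset.sum_div]
  apply Finset.sum_congr rfl
  intro r hr
  have h1 : 1 ≤ r := (Finset.mem_Icc.mp hr).1
  have hrm : r ≤ n - 1 := (Finset.mem_Icc.mp hr).2
  have hrpos : (0:ℝ) < (r:ℝ) := by exact_mod_cast h1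
  have hexp : n - r - 1 = n - 1 - r := by omega
  have h2 : ((n:ℝ) - 1) ≠ 0 := by rw [hM]; exact ne_of_gt hMpos
  have h3 : (r:ℝ) ≠ 0 := ne_of_gt hrpos
  rw [dInfty, hexp]
  field_simp

lemma feasible_dInfty {n : ℕ} (hn : 2 ≤ n) : feasible n (dInfty n) := by
  have hM : ((n:ℝ) - 1) = ((n - 1 : ℕ) : ℝ) := by
    push_cast [Nat.cast_sub (by omega : 1 ≤ n)]; ring
  have hMpos : (0:ℝ) < ((n - 1 : ℕ) : ℝ) := by
    have : 1 ≤ n - 1 := by omega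
    exact_mod_cast Nat.lt_of_lt_of_le Nat.zero_lt_one this
  constructor
  · intro r hr
    have h1 : 1 ≤ r := (Finset.mem_Icc.mp hr).1
    have : (0:ℝ) < (r:ℝ) := by exact_mod_cast h1
    have hrp : (0:ℝ) < (r:ℝ) := by exact_mod_cast h1
    rw [dInfty, hM]
    positivity
  · have : ∀ r ∈ Icc 1 (n-1), (r : ℝ) * dInfty n r = 1 / ((n - 1 : ℕ) : ℝ) := by
      intro r hr
      have h1 : 1 ≤ r := (Finset.mem_Icc.mp hr).1
      have hrpos : (0:ℝ) < (r:ℝ) := by exact_mod_cast h1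
      have h2 : ((n:ℝ) - 1) ≠ 0 := by rw [hM]; exact ne_of_gt hMpos
      have h3 : (r:ℝ) ≠ 0 := ne_of_gt hrpos
      rw [dInfty]
      field_simp
      exact hM.symm
    rw [Finset.sum_congr rfl this, Finset.sum_const, Nat.card_Icc]
    have h2 : ((n:ℝ) - 1) ≠ 0 := by rw [hM]; exact ne_of_gt hMpos
    simp only [nsmul_eq_mul]
    rw [show n - 1 + 1 - 1 = n - 1 from by omega, ← hM]
    field_simp

lemma ae_ne_point (c : ℝ) : ∀ᵐ z : ℝ ∂(MeasureTheory.volume), z ≠ c := by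
  refine MeasureTheory.ae_iff.mpr ?_
  simp only [not_not]
  have h : {a : ℝ | a = c} = {c} := by ext x; simp
  rw [h]
  exact measure_singleton c

lemma aFun_continuous (n : ℕ) (d : ℕ → ℝ) : Continuous (aFun n d) := by
  unfold aFun
  apply continuous_finset_sum
  intro r _
  fun_prop

lemma integral_one_sub_mul_aFun {n : ℕ} (hn : 2 ≤ n) (d : ℕ → ℝ) :
    ∫ z in (0:ℝ)..1, (1 - z) * aFun n d z
      = (∑ r ∈ Icc 1 (n - 1), (r : ℝ) * d r) / (n : ℝ) := by
  have hfun : ∀ z : ℝ, (1 - z) * aFun n d z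
      = ∑ r ∈ Icc 1 (n - 1),
          ((r : ℝ) * ((n - 1).choose r : ℝ) * d r) * (z ^ (n - 1 - r) * (1 - z) ^ r) := by
    intro z
    rw [aFun, Finset.mul_sum]
    apply Finset.sum_congr rfl
    intro r hr
    obtain ⟨h1, h2⟩ := Finset.mem_Icc.mp hr
    have e1 : n - r - 1 = n - 1 - r := by omega
    have e2 : (1 - z) ^ r = (1 - z) ^ (r - 1) * (1 - z) := by
      rw [← pow_succ]; congr 1; omega
    rw [e1, e2]; ring
  simp_rw [hfun]
  rw [intervalIntegral.integral_finset_sum]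
  swap
  · intro r _
    exact ((by fun_prop : Continuous fun z : ℝ => ((r : ℝ) * ((n - 1).choose r : ℝ) * d r)
      * (z ^ (n - 1 - r) * (1 - z) ^ r)).intervalIntegrable 0 1)
  have hterm : ∀ r ∈ Icc 1 (n - 1),
      (∫ z in (0:ℝ)..1, ((r : ℝ) * ((n - 1).choose r : ℝ) * d r) * (z ^ (n - 1 - r) * (1 - z) ^ r))
        = ((r : ℝ) * d r) / (n : ℝ) := by
    intro r hr
    obtain ⟨h1, h2⟩ := Finset.mem_Icc.mp hr
    rw [intervalIntegral.integral_const_mul, betaNat]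
    have e3 : n - 1 - r + r + 1 = n := by omega
    rw [e3]
    have hcf : ((n - 1).choose r : ℝ) * ((n - 1 - r).factorial : ℝ) * (r.factorial : ℝ)
        = ((n - 1).factorial : ℝ) := by
      rw [← Nat.cast_mul, ← Nat.cast_mul]
      congr 1
      calc (n - 1).choose r * (n - 1 - r).factorial * r.factorial
          = (n - 1).choose r * r.factorial * (n - 1 - r).factorial := by ring
        _ = (n - 1).factorial := Nat.choose_mul_factorial_mul_factorial h2
    have hnf : ((n : ℕ).factorial : ℝ) = (n : ℝ) * ((n - 1).factorial : ℝ) := by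
      rw [← Nat.cast_mul]
      congr 1
      rw [show n = (n - 1) + 1 from by omega, Nat.factorial_succ]
      congr 1 <;> omega
    have hnp : (0 : ℝ) < (n : ℝ) := by positivity
    have hfp : (0 : ℝ) < ((n - 1).factorial : ℝ) := by positivity
    rw [hnf]
    field_simp
    linear_combination (d r) * hcf
  rw [Finset.sum_congr rfl hterm, ← Finset.sum_div]

lemma W_le {n : ℕ} (hn : 2 ≤ n) {d : ℕ → ℝ} (hd : feasible n d) :
    W n d ≤ 1 - Real.log ((n : ℝ) - 1) := by
  obtain ⟨hd0, hd1⟩ := hd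
  set M : ℝ := (n : ℝ) - 1 with hMdef
  have hM1 : (1 : ℝ) ≤ M := by
    have : (2:ℝ) ≤ (n:ℝ) := by exact_mod_cast hn
    simp only [hMdef]; linarith
  have hMpos : (0 : ℝ) < M := lt_of_lt_of_le one_pos hM1
  -- find a positive coordinate
  have hsne : (∑ r ∈ Icc 1 (n - 1), (r : ℝ) * d r) ≠ 0 := by rw [hd1]; exact one_ne_zero
  obtain ⟨r0, hr0mem, hr0ne⟩ := Finset.exists_ne_zero_of_sum_ne_zero hsne
  obtain ⟨hr01, hr0m⟩ := Finset.mem_Icc.mp hr0mem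
  have hdr0 : 0 < d r0 :=
    lt_of_le_of_ne (hd0 r0 hr0mem) (Ne.symm (right_ne_zero_of_mul hr0ne))
  set c : ℝ := (r0 : ℝ) * ((n - 1).choose r0 : ℝ) * d r0 with hcdef
  have hc : 0 < c := by
    have h1 : (0:ℝ) < (r0 : ℝ) := by exact_mod_cast hr01
    have h2 : (0:ℝ) < ((n - 1).choose r0 : ℝ) := by
      exact_mod_cast Nat.choose_pos hr0m
    positivity
  set B : ℝ := ∑ r ∈ Icc 1 (n - 1), (r : ℝ) * ((n - 1).choose r : ℝ) * d r with hBdef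
  have hcB : c ≤ B := by
    apply Finset.single_le_sum (f := fun i : ℕ => (i : ℝ) * ((n - 1).choose i : ℝ) * d i) _ hr0mem
    intro r hr
    have : (0:ℝ) ≤ (r:ℝ) := by positivity
    have : (0:ℝ) ≤ ((n-1).choose r : ℝ) := by positivity
    have := hd0 r hr
    positivity
  have hB : 0 < B := lt_of_lt_of_le hc hcB
  -- pointwise facts on Ioo 0 1
  have key : ∀ z ∈ Set.Ioo (0:ℝ) 1,
      c * (z ^ (n-1) * (1 - z) ^ (n-1)) ≤ aFun n d z ∧ aFun n d z ≤ B := by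
    intro z hz
    obtain ⟨hzp, hz1⟩ := hz
    have h1z : (0:ℝ) < 1 - z := by linarith
    have hnonneg : ∀ r ∈ Icc 1 (n-1),
        0 ≤ (r : ℝ) * ((n - 1).choose r : ℝ) * z ^ (n - r - 1) * (1 - z) ^ (r - 1) * d r := by
      intro r hr
      have := hd0 r hr
      positivity
    constructor
    · have hterm : c * (z ^ (n-1) * (1 - z) ^ (n-1))
          ≤ (r0 : ℝ) * ((n - 1).choose r0 : ℝ) * z ^ (n - r0 - 1) * (1 - z) ^ (r0 - 1) * d r0 := by
        have e1 : z ^ (n-1) ≤ z ^ (n - r0 - 1) :=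
          pow_le_pow_of_le_one hzp.le hz1.le (by omega)
        have e2 : (1 - z) ^ (n-1) ≤ (1 - z) ^ (r0 - 1) :=
          pow_le_pow_of_le_one h1z.le (by linarith) (by omega)
        calc c * (z ^ (n-1) * (1 - z) ^ (n-1))
            ≤ c * (z ^ (n - r0 - 1) * (1 - z) ^ (r0 - 1)) := by
              apply mul_le_mul_of_nonneg_left _ hc.le
              apply mul_le_mul e1 e2 (pow_nonneg h1z.le _) (pow_nonneg hzp.le _)
          _ = (r0 : ℝ) * ((n - 1).choose r0 : ℝ) * z ^ (n - r0 - 1) * (1 - z) ^ (r0 - 1) * d r0 := by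
              rw [hcdef]; ring
      exact le_trans hterm (Finset.single_le_sum hnonneg hr0mem)
    · apply Finset.sum_le_sum
      intro r hr
      have e1 : z ^ (n - r - 1) ≤ 1 := pow_le_one₀ hzp.le hz1.le
      have e2 : (1 - z) ^ (r - 1) ≤ 1 := pow_le_one₀ h1z.le (by linarith)
      calc (r : ℝ) * ((n - 1).choose r : ℝ) * z ^ (n - r - 1) * (1 - z) ^ (r - 1) * d r
          = ((r : ℝ) * ((n - 1).choose r : ℝ) * d r) * (z ^ (n - r - 1) * (1 - z) ^ (r - 1)) := by
            ring
        _ ≤ ((r : ℝ) * ((n - 1).choose r : ℝ) * d r) * 1 := by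
            apply mul_le_mul_of_nonneg_left
            · calc z ^ (n - r - 1) * (1 - z) ^ (r - 1) ≤ 1 * 1 :=
                mul_le_mul e1 e2 (pow_nonneg h1z.le _) zero_le_one
                _ = 1 := by ring
            · have := hd0 r hr
              positivity
        _ = (r : ℝ) * ((n - 1).choose r : ℝ) * d r := by ring
  have apos : ∀ z ∈ Set.Ioo (0:ℝ) 1, 0 < aFun n d z := by
    intro z hz
    have h := (key z hz).1
    have h1z : (0:ℝ) < 1 - z := by linarith [hz.2]
    have hpos : 0 < c * (z ^ (n-1) * (1 - z) ^ (n-1)) :=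
      mul_pos hc (mul_pos (pow_pos hz.1 _) (pow_pos h1z _))
    linarith
  -- integrability of log ∘ aFun
  have II : IntervalIntegrable (fun z => Real.log (aFun n d z)) MeasureTheory.volume 0 1 := by
    rw [intervalIntegrable_iff_integrableOn_Ioc_of_le zero_le_one]
    set k : ℝ := ((n - 1 : ℕ) : ℝ) with hkdef
    have hk : (0:ℝ) ≤ k := by positivity
    have hg : IntervalIntegrable (fun z : ℝ =>
        |Real.log c| + (k * |Real.log z| + k * |Real.log (1 - z)|) + |Real.log B|)
        MeasureTheory.volume 0 1 := by
      apply IntervalIntegrable.add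
      apply IntervalIntegrable.add
      · exact intervalIntegrable_const
      · exact ((log_intervalIntegrable.abs.const_mul k).add
          (log_one_sub_intervalIntegrable.abs.const_mul k))
      · exact intervalIntegrable_const
    rw [intervalIntegrable_iff_integrableOn_Ioc_of_le zero_le_one] at hg
    apply hg.mono'
    · exact ((Real.measurable_log.comp (aFun_continuous n d).measurable).aestronglyMeasurable)
    · filter_upwards [ae_restrict_mem measurableSet_Ioc,
        MeasureTheory.ae_restrict_of_ae (ae_ne_point (1:ℝ))] with z hz hz1
      have hzIoo : z ∈ Set.Ioo (0:ℝ) 1 := ⟨hz.1, lt_of_le_of_ne hz.2 hz1⟩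
      obtain ⟨hlow, hup⟩ := key z hzIoo
      have hzp := hzIoo.1
      have h1z : (0:ℝ) < 1 - z := by linarith [hzIoo.2]
      have hap := apos z hzIoo
      rw [Real.norm_eq_abs, abs_le]
      constructor
      · have hprod : (0:ℝ) < z ^ (n-1) * (1 - z) ^ (n-1) :=
          mul_pos (pow_pos hzp _) (pow_pos h1z _)
        have hlog : Real.log c + Real.log (z ^ (n-1) * (1 - z) ^ (n-1)) ≤ Real.log (aFun n d z) := by
          rw [← Real.log_mul hc.ne' hprod.ne']
          exact Real.log_le_log (mul_pos hc hprod) hlow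
        have hsplit : Real.log (z ^ (n-1) * (1 - z) ^ (n-1))
            = k * Real.log z + k * Real.log (1 - z) := by
          rw [Real.log_mul (pow_pos hzp _).ne' (pow_pos h1z _).ne', Real.log_pow, Real.log_pow,
            hkdef]
        rw [hsplit] at hlog
        have e1 : -|Real.log c| ≤ Real.log c := neg_abs_le _
        have e2 : -(k * |Real.log z|) ≤ k * Real.log z := by
          calc -(k * |Real.log z|) = k * (-|Real.log z|) := by ring
            _ ≤ k * Real.log z := mul_le_mul_of_nonneg_left (neg_abs_le _) hk
        have e3 : -(k * |Real.log (1-z)|) ≤ k * Real.log (1-z) := by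
          calc -(k * |Real.log (1-z)|) = k * (-|Real.log (1-z)|) := by ring
            _ ≤ k * Real.log (1-z) := mul_le_mul_of_nonneg_left (neg_abs_le _) hk
        have e4 : (0:ℝ) ≤ |Real.log B| := abs_nonneg _
        linarith
      · have hlog : Real.log (aFun n d z) ≤ Real.log B := Real.log_le_log hap hup
        have e1 : Real.log B ≤ |Real.log B| := le_abs_self _
        have e2 : (0:ℝ) ≤ |Real.log c| := abs_nonneg _
        have e3 : (0:ℝ) ≤ k * |Real.log z| := by positivity
        have e4 : (0:ℝ) ≤ k * |Real.log (1-z)| := by positivity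
        linarith
  -- the RHS majorant
  set F : ℝ → ℝ := fun z => M * ((1 - z) * aFun n d z) - (1 + Real.log M) - Real.log (1 - z)
    with hFdef
  have hFint : IntervalIntegrable F MeasureTheory.volume 0 1 := by
    apply IntervalIntegrable.sub _ log_one_sub_intervalIntegrable
    exact ((continuous_const.mul ((continuous_const.sub continuous_id).mul
      (aFun_continuous n d))).sub continuous_const).intervalIntegrable 0 1
  have hmono : W n d ≤ ∫ z in (0:ℝ)..1, F z := by
    rw [W]
    apply intervalIntegral.integral_mono_ae_restrict zero_le_one II hFint
    filter_upwards [ae_restrict_mem measurableSet_Icc,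
      MeasureTheory.ae_restrict_of_ae (ae_ne_point (0:ℝ)),
      MeasureTheory.ae_restrict_of_ae (ae_ne_point (1:ℝ))] with z hz hz0 hz1
    have hzIoo : z ∈ Set.Ioo (0:ℝ) 1 :=
      ⟨lt_of_le_of_ne hz.1 (Ne.symm hz0), lt_of_le_of_ne hz.2 hz1⟩
    have h1z : (0:ℝ) < 1 - z := by linarith [hzIoo.2]
    have hap := apos z hzIoo
    have hpm : (0:ℝ) < aFun n d z * (M * (1 - z)) :=
      mul_pos hap (mul_pos hMpos h1z)
    have hlog := Real.log_le_sub_one_of_pos hpm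
    rw [Real.log_mul hap.ne' (by positivity), Real.log_mul hMpos.ne' h1z.ne'] at hlog
    have hre : aFun n d z * (M * (1 - z)) = M * ((1 - z) * aFun n d z) := by ring
    rw [hre] at hlog
    simp only [hFdef]
    linarith
  have hFval : ∫ z in (0:ℝ)..1, F z = M / (n : ℝ) - Real.log M := by
    simp only [hFdef]
    rw [intervalIntegral.integral_sub _ log_one_sub_intervalIntegrable]
    swap
    · exact ((continuous_const.mul ((continuous_const.sub continuous_id).mul
        (aFun_continuous n d))).sub continuous_const).intervalIntegrable 0 1
    rw [intervalIntegral.integral_sub _ intervalIntegrable_const]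
    swap
    · exact (continuous_const.mul ((continuous_const.sub continuous_id).mul
        (aFun_continuous n d))).intervalIntegrable 0 1
    rw [intervalIntegral.integral_const_mul, integral_one_sub_mul_aFun hn d, hd1,
      integral_log_one_sub]
    simp
    ring
  rw [hFval] at hmono
  have hlast : M / (n : ℝ) ≤ 1 := by
    rw [div_le_one (by positivity : (0:ℝ) < (n:ℝ))]
    simp only [hMdef]; linarith
  linarith

lemma W_dInfty_ge {n : ℕ} (hn : 3 ≤ n) {M s : ℝ} (hM : M = (n : ℝ) - 1)
    (hs : s = Real.log M / M) :
    1 - Real.log M + (1 - s) * Real.log (1 - 1 / M) + s * Real.log s - s ≤ W n (dInfty n) := by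
  set m : ℕ := n - 1 with hmdef
  have hm2 : 2 ≤ m := by omega
  have hMm : M = (m : ℝ) := by
    rw [hM, hmdef]
    push_cast [Nat.cast_sub (by omega : 1 ≤ n)]
    ring
  have hM2 : (2:ℝ) ≤ M := by
    rw [hMm]; exact_mod_cast hm2
  have hMpos : (0:ℝ) < M := by linarith
  have hlogM : 0 < Real.log M := Real.log_pos (by linarith)
  have hs0 : 0 < s := by rw [hs]; exact div_pos hlogM hMpos
  have hs1 : s < 1 := by
    rw [hs, div_lt_one hMpos]
    have := Real.log_le_sub_one_of_pos hMpos
    linarith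
  have h1M : 0 < 1 - 1 / M := by
    have : 1 / M ≤ 1 / 2 := by
      apply one_div_le_one_div_of_le <;> linarith
    linarith
  -- rewrite W
  have hWeq : W n (dInfty n)
      = ∫ z in (0:ℝ)..1, Real.log ((∑ k ∈ range m, z ^ k) / M) := by
    rw [W]
    apply intervalIntegral.integral_congr
    intro z _
    show Real.log (aFun n (dInfty n) z) = Real.log ((∑ k ∈ range m, z ^ k) / M)
    rw [aFun_dInfty (show 2 ≤ n by omega) z, ← hM, ← hmdef]
  have hP1 : ∀ z : ℝ, 0 ≤ z → 1 ≤ ∑ k ∈ range m, z ^ k := by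
    intro z hz0
    have h0m : 0 ∈ range m := by simp; omega
    have := Finset.single_le_sum (f := fun k : ℕ => z ^ k)
      (fun i _ => pow_nonneg hz0 i) h0m
    simpa using this
  have hPpos : ∀ z : ℝ, 0 ≤ z → 0 < (∑ k ∈ range m, z ^ k) / M := by
    intro z hz0
    exact div_pos (lt_of_lt_of_le one_pos (hP1 z hz0)) hMpos
  have hcont : ContinuousOn (fun z : ℝ => Real.log ((∑ k ∈ range m, z ^ k) / M))
      (Set.Icc (0:ℝ) 1) := by
    apply ContinuousOn.log
    · exact ((continuous_finset_sum _ fun i _ => continuous_pow i).div_const M).continuousOn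
    · intro z hz
      exact ne_of_gt (hPpos z hz.1)
  have hsub1 : Set.uIcc (0:ℝ) (1 - s) ⊆ Set.Icc (0:ℝ) 1 := by
    rw [Set.uIcc_of_le (by linarith : (0:ℝ) ≤ 1 - s)]
    apply Set.Icc_subset_Icc (le_refl 0) (by linarith)
  have hsub2 : Set.uIcc (1 - s) (1:ℝ) ⊆ Set.Icc (0:ℝ) 1 := by
    rw [Set.uIcc_of_le (by linarith : (1:ℝ) - s ≤ 1)]
    apply Set.Icc_subset_Icc (by linarith) (le_refl 1)
  have hint1 : IntervalIntegrable (fun z : ℝ => Real.log ((∑ k ∈ range m, z ^ k) / M))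
      MeasureTheory.volume 0 (1 - s) := (hcont.mono hsub1).intervalIntegrable
  have hint2 : IntervalIntegrable (fun z : ℝ => Real.log ((∑ k ∈ range m, z ^ k) / M))
      MeasureTheory.volume (1 - s) 1 := (hcont.mono hsub2).intervalIntegrable
  rw [hWeq, ← intervalIntegral.integral_add_adjacent_intervals hint1 hint2]
  -- piece 2
  have hpiece2 : s * (-Real.log M)
      ≤ ∫ z in (1 - s)..1, Real.log ((∑ k ∈ range m, z ^ k) / M) := by
    have hmono := intervalIntegral.integral_mono_on (μ := MeasureTheory.volume)
      (by linarith : (1:ℝ) - s ≤ 1)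
      (_root_.intervalIntegrable_const (c := -Real.log M)) hint2 ?_
    · rw [intervalIntegral.integral_const] at hmono
      calc s * (-Real.log M) = (1 - (1 - s)) • (-Real.log M) := by
            rw [smul_eq_mul]; ring
        _ ≤ _ := hmono
    · intro z hz
      have hz0 : (0:ℝ) ≤ z := by
        have := hz.1; linarith
      calc -Real.log M = Real.log (1 / M) := by rw [one_div, Real.log_inv]
        _ ≤ Real.log ((∑ k ∈ range m, z ^ k) / M) := by
            apply Real.log_le_log (div_pos one_pos hMpos)
            exact (div_le_div_iff_of_pos_right hMpos).mpr (hP1 z hz0)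
  -- piece 1
  have hpiece1 : (1 - s) * (Real.log (1 - 1 / M) - Real.log M) - (-1 - s * Real.log s + s)
      ≤ ∫ z in (0:ℝ)..(1 - s), Real.log ((∑ k ∈ range m, z ^ k) / M) := by
    have hlogint : IntervalIntegrable (fun z : ℝ => Real.log (1 - z))
        MeasureTheory.volume 0 (1 - s) := by
      apply ContinuousOn.intervalIntegrable
      apply ContinuousOn.log ((continuous_const.sub continuous_id).continuousOn)
      intro z hz
      rw [Set.uIcc_of_le (by linarith : (0:ℝ) ≤ 1 - s)] at hz
      have : z ≤ 1 - s := hz.2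
      have : 0 < 1 - z := by linarith
      exact ne_of_gt this
    have hfint : IntervalIntegrable
        (fun z : ℝ => (Real.log (1 - 1 / M) - Real.log M) - Real.log (1 - z))
        MeasureTheory.volume 0 (1 - s) := intervalIntegrable_const.sub hlogint
    have hmono := intervalIntegral.integral_mono_on (μ := MeasureTheory.volume)
      (by linarith : (0:ℝ) ≤ 1 - s) hfint hint1 ?_
    · rw [intervalIntegral.integral_sub intervalIntegrable_const hlogint,
        intervalIntegral.integral_const, integral_log_one_sub_partial hs0 (le_of_lt hs1)]
        at hmono
      calc (1 - s) * (Real.log (1 - 1 / M) - Real.log M) - (-1 - s * Real.log s + s)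
          = (1 - s - 0) • (Real.log (1 - 1 / M) - Real.log M)
            - (-1 - s * Real.log s + s) := by simp
        _ ≤ _ := hmono
    · intro z hz
      obtain ⟨hz0, hz1s⟩ := hz
      have h1z : 0 < 1 - z := by linarith
      have hzm : z ^ m ≤ 1 / M := by
        have e1 : z ^ m ≤ (1 - s) ^ m := pow_le_pow_left₀ hz0 hz1s m
        have e2 : (1 - s) ^ m ≤ Real.exp (-s) ^ m := by
          apply pow_le_pow_left₀ (by linarith)
          have := Real.add_one_le_exp (-s)
          linarith
        have e3 : Real.exp (-s) ^ m = Real.exp ((m:ℝ) * (-s)) := by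
          rw [← Real.exp_nat_mul]
        have e4 : (m:ℝ) * (-s) = -Real.log M := by
          rw [hs, ← hMm]
          field_simp
        have e5 : Real.exp (-Real.log M) = 1 / M := by
          rw [Real.exp_neg, Real.exp_log hMpos, one_div]
        calc z ^ m ≤ (1 - s) ^ m := e1
          _ ≤ Real.exp (-s) ^ m := e2
          _ = 1 / M := by rw [e3, e4, e5]
      have hgeo : (∑ k ∈ range m, z ^ k) * (1 - z) = 1 - z ^ m := by
        have h := geom_sum_mul z m
        calc (∑ k ∈ range m, z ^ k) * (1 - z)
            = -((∑ k ∈ range m, z ^ k) * (z - 1)) := by ring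
          _ = -(z ^ m - 1) := by rw [h]
          _ = 1 - z ^ m := by ring
      have hPz : (1 - 1 / M) / (1 - z) ≤ ∑ k ∈ range m, z ^ k := by
        rw [div_le_iff₀ h1z, hgeo]
        linarith
      have harg : 0 < (1 - 1 / M) / ((1 - z) * M) := by positivity
      calc Real.log (1 - 1 / M) - Real.log M - Real.log (1 - z)
          = Real.log ((1 - 1 / M) / ((1 - z) * M)) := by
            rw [Real.log_div (ne_of_gt h1M) (by positivity), Real.log_mul h1z.ne' hMpos.ne']
            ring
        _ ≤ Real.log ((∑ k ∈ range m, z ^ k) / M) := by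
            apply Real.log_le_log harg
            calc (1 - 1 / M) / ((1 - z) * M) = ((1 - 1 / M) / (1 - z)) / M := by
                  rw [div_div]
              _ ≤ (∑ k ∈ range m, z ^ k) / M := (div_le_div_iff_of_pos_right hMpos).mpr hPz
  have := add_le_add hpiece1 hpiece2
  refine le_trans ?_ this
  nlinarith [hlogM, hs0, hs1]

end Aux

section Main

open intervalIntegral Real

/-- The prize schedule `d^∞` is asymptotically optimal:
`lim_{n→∞} ( sup_{d ∈ D} W(d) − W(d^∞) ) = 0`. -/
theorem dInfty_asymptotically_optimal :
    Filter.Tendsto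
      (fun n : ℕ => sSup (W n '' {d : ℕ → ℝ | feasible n d}) - W n (dInfty n))
      Filter.atTop (nhds 0) := by
  have hMtends : Filter.Tendsto (fun n : ℕ => (n : ℝ) - 1) Filter.atTop Filter.atTop :=
    Filter.tendsto_atTop_add_const_right _ _ tendsto_natCast_atTop_atTop
  have hs' : Filter.Tendsto (fun x : ℝ => Real.log x / x) Filter.atTop (nhds 0) := by
    have := Real.tendsto_pow_log_div_mul_add_atTop 1 0 1 one_ne_zero
    simpa using this
  have hstends : Filter.Tendsto
      (fun n : ℕ => Real.log ((n : ℝ) - 1) / ((n : ℝ) - 1)) Filter.atTop (nhds 0) :=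
    hs'.comp hMtends
  have hslogs : Filter.Tendsto
      (fun n : ℕ => (Real.log ((n : ℝ) - 1) / ((n : ℝ) - 1))
        * Real.log (Real.log ((n : ℝ) - 1) / ((n : ℝ) - 1))) Filter.atTop (nhds 0) := by
    have hc : Filter.Tendsto (fun x : ℝ => x * Real.log x) (nhds 0) (nhds 0) := by
      have := Real.continuous_mul_log.tendsto 0
      simpa using this
    exact hc.comp hstends
  have hinv : Filter.Tendsto (fun n : ℕ => 1 / ((n : ℝ) - 1)) Filter.atTop (nhds 0) := by
    simpa [one_div, Pi.inv_def] using hMtends.inv_tendsto_atTop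
  have hlog1 : Filter.Tendsto (fun n : ℕ => Real.log (1 - 1 / ((n : ℝ) - 1)))
      Filter.atTop (nhds 0) := by
    have h1 : Filter.Tendsto (fun n : ℕ => 1 - 1 / ((n : ℝ) - 1)) Filter.atTop (nhds 1) := by
      simpa using tendsto_const_nhds.sub hinv
    have h2 : ContinuousAt Real.log 1 := Real.continuousAt_log one_ne_zero
    have := h2.tendsto.comp h1
    simpa [Real.log_one, Function.comp_def] using this
  have heps : Filter.Tendsto (fun n : ℕ =>
      -((1 - Real.log ((n : ℝ) - 1) / ((n : ℝ) - 1))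
          * Real.log (1 - 1 / ((n : ℝ) - 1)))
        - (Real.log ((n : ℝ) - 1) / ((n : ℝ) - 1))
            * Real.log (Real.log ((n : ℝ) - 1) / ((n : ℝ) - 1))
        + Real.log ((n : ℝ) - 1) / ((n : ℝ) - 1)) Filter.atTop (nhds 0) := by
    have := ((((tendsto_const_nhds (x := (1:ℝ)).sub hstends).mul hlog1).neg).sub hslogs).add
      hstends
    simpa using this
  apply tendsto_of_tendsto_of_tendsto_of_le_of_le' (tendsto_const_nhds (x := (0:ℝ))) heps
  · -- 0 ≤ F n eventually
    filter_upwards [Filter.eventually_ge_atTop 3] with n hn3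
    have hmem : W n (dInfty n) ∈ W n '' {d : ℕ → ℝ | feasible n d} :=
      ⟨dInfty n, feasible_dInfty (by omega), rfl⟩
    have bdd : BddAbove (W n '' {d : ℕ → ℝ | feasible n d}) := by
      refine ⟨1 - Real.log ((n : ℝ) - 1), ?_⟩
      rintro y ⟨d, hd, rfl⟩
      exact W_le (by omega) hd
    have := le_csSup bdd hmem
    linarith
  · -- F n ≤ ε n eventually
    filter_upwards [Filter.eventually_ge_atTop 3] with n hn3
    have hmem : W n (dInfty n) ∈ W n '' {d : ℕ → ℝ | feasible n d} :=
      ⟨dInfty n, feasible_dInfty (by omega), rfl⟩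
    have h1 : sSup (W n '' {d : ℕ → ℝ | feasible n d}) ≤ 1 - Real.log ((n : ℝ) - 1) := by
      apply csSup_le ⟨_, hmem⟩
      rintro y ⟨d, hd, rfl⟩
      exact W_le (by omega) hd
    have h2 := W_dInfty_ge (n := n) hn3 rfl rfl
    linarith

end Main
end

section
/- Let n ≥ 3 be an integer and d ∈ D. If d_1 = 0 then ℓ_1(d) = +∞, i.e., the integral ∫_0^1 (n−1) z^{n−2} / a(z; d) dz diverges; and if d_{n−1} = 0 then ℓ_{n−1}(d) = +∞, i.e., the integral ∫_0^1 (n−1) (1−z)^{n−2} / a(z; d) dz diverges. -/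
open MeasureTheory Finset

/-- The marginal incentive term `ℓ_r(d)` as an extended-real-valued (lower) integral,
taking the value `+∞` if the integral diverges. -/
noncomputable def ellE (n : ℕ) (d : ℕ → ℝ) (r : ℕ) : ENNReal :=
  ∫⁻ z in Set.Ioo (0:ℝ) 1,
    ENNReal.ofReal
      ((r : ℝ) * ((n - 1).choose r : ℝ) * z ^ (n - r - 1) * (1 - z) ^ (r - 1) /
        aFun n d z)

lemma lintegral_inv_Ioo_top {t : ℝ} (ht : 0 < t) :
    ∫⁻ z in Set.Ioo (0:ℝ) t, ENNReal.ofReal z⁻¹ = ⊤ := by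
  by_contra h
  have hint : IntegrableOn (fun z : ℝ => z⁻¹) (Set.Ioo 0 t) := by
    constructor
    · exact measurable_inv.aestronglyMeasurable
    · rw [hasFiniteIntegral_iff_ofReal]
      · exact lt_top_iff_ne_top.mpr h
      · filter_upwards [ae_restrict_mem measurableSet_Ioo] with x hx
        exact (inv_pos.mpr hx.1).le
  have h2 : IntegrableOn (fun x : ℝ => x ^ (-1 : ℝ)) (Set.Ioo 0 t) := by
    apply hint.congr_fun ?_ measurableSet_Ioo
    intro x hx
    simp [Real.rpow_neg_one]
  rw [intervalIntegral.integrableOn_Ioo_rpow_iff ht] at h2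
  linarith

lemma lintegral_one_sub_inv_top :
    ∫⁻ z in Set.Ioo (1/2 : ℝ) 1, ENNReal.ofReal (1 - z)⁻¹ = ⊤ := by
  have hmp : MeasurePreserving (fun x : ℝ => 1 - x) volume volume :=
    Measure.measurePreserving_sub_left volume 1
  have hemb : MeasurableEmbedding (fun x : ℝ => 1 - x) :=
    (MeasurableEquiv.subLeft (1:ℝ)).measurableEmbedding
  have hpre : (fun x : ℝ => 1 - x) ⁻¹' Set.Ioo (0:ℝ) (1/2) = Set.Ioo (1/2 : ℝ) 1 := by
    ext x
    simp only [Set.mem_preimage, Set.mem_Ioo]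
    constructor <;> intro h <;> constructor <;> linarith [h.1, h.2]
  have := hmp.setLIntegral_comp_preimage_emb hemb
    (fun y => ENNReal.ofReal y⁻¹) (Set.Ioo (0:ℝ) (1/2))
  rw [hpre] at this
  rw [this]
  exact lintegral_inv_Ioo_top (by norm_num)

lemma lintegral_top_of_bound {s : Set ℝ} (hs : MeasurableSet s) {K : ℝ} (hK : 0 < K)
    {f g : ℝ → ℝ} (hb : ∀ z ∈ s, K * f z ≤ g z)
    (hf : ∫⁻ z in s, ENNReal.ofReal (f z) = ⊤) :
    ∫⁻ z in s, ENNReal.ofReal (g z) = ⊤ := by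
  have h1 : ∫⁻ z in s, ENNReal.ofReal (K * f z) = ⊤ := by
    simp_rw [ENNReal.ofReal_mul hK.le]
    rw [lintegral_const_mul' _ _ ENNReal.ofReal_ne_top, hf,
      ENNReal.mul_top ((ENNReal.ofReal_pos.mpr hK).ne')]
  rw [eq_top_iff, ← h1]
  apply lintegral_mono_ae
  filter_upwards [ae_restrict_mem hs] with z hz
  exact ENNReal.ofReal_le_ofReal (hb z hz)

lemma aFun_pos (n : ℕ) (d : ℕ → ℝ) (hd : feasible n d) {z : ℝ}
    (hz : z ∈ Set.Ioo (0:ℝ) 1) : 0 < aFun n d z := by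
  obtain ⟨hz0, hz1⟩ := hz
  obtain ⟨hd0, hd1⟩ := hd
  have hterm : ∀ r ∈ Finset.Icc 1 (n-1),
      0 ≤ (r : ℝ) * ((n - 1).choose r : ℝ) * z ^ (n - r - 1) * (1 - z) ^ (r - 1) * d r := by
    intro r hr
    have hdr := hd0 r hr
    have h1z : (0:ℝ) ≤ 1 - z := by linarith
    exact mul_nonneg (mul_nonneg (mul_nonneg (mul_nonneg (Nat.cast_nonneg r)
      (Nat.cast_nonneg _)) (pow_nonneg hz0.le _)) (pow_nonneg h1z _)) hdr
  obtain ⟨r0, hr0, hdr0⟩ : ∃ r ∈ Finset.Icc 1 (n-1), 0 < d r := by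
    by_contra hc
    push_neg at hc
    have : ∑ r ∈ Finset.Icc 1 (n-1), (r : ℝ) * d r = 0 := by
      apply Finset.sum_eq_zero
      intro r hr
      have h0 := le_antisymm (hc r hr) (hd0 r hr)
      rw [h0, mul_zero]
    rw [hd1] at this
    norm_num at this
  have hle : (r0 : ℝ) * ((n - 1).choose r0 : ℝ) * z ^ (n - r0 - 1) * (1 - z) ^ (r0 - 1) * d r0
      ≤ aFun n d z := Finset.single_le_sum hterm hr0
  refine lt_of_lt_of_le ?_ hle
  simp only [Finset.mem_Icc] at hr0
  have h1 : 0 < (r0 : ℝ) := by exact_mod_cast hr0.1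
  have h2 : 0 < ((n - 1).choose r0 : ℝ) := by
    exact_mod_cast Nat.choose_pos hr0.2
  have h1z : (0:ℝ) < 1 - z := by linarith
  exact mul_pos (mul_pos (mul_pos (mul_pos h1 h2) (pow_pos hz0 _)) (pow_pos h1z _)) hdr0

lemma M_pos (n : ℕ) (d : ℕ → ℝ) (hd : feasible n d) :
    1 ≤ ∑ r ∈ Finset.Icc 1 (n-1), (r : ℝ) * ((n - 1).choose r : ℝ) * d r := by
  obtain ⟨hd0, hd1⟩ := hd
  rw [← hd1]
  apply Finset.sum_le_sum
  intro r hr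
  simp only [Finset.mem_Icc] at hr
  have hc : (1:ℝ) ≤ ((n - 1).choose r : ℝ) := by
    exact_mod_cast Nat.one_le_iff_ne_zero.mpr (Nat.choose_pos hr.2).ne'
  have h0 : (0:ℝ) ≤ (r:ℝ) * d r := mul_nonneg (by positivity) (hd0 r (Finset.mem_Icc.mpr hr))
  calc (r:ℝ) * d r = (r:ℝ) * d r * 1 := by ring
    _ ≤ (r:ℝ) * d r * ((n - 1).choose r : ℝ) := by
        exact mul_le_mul_of_nonneg_left hc h0
    _ = (r:ℝ) * ((n - 1).choose r : ℝ) * d r := by ring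

/-- Upper bound on `aFun` near `z = 1` when `d 1 = 0`. -/
lemma aFun_le_one_sub (n : ℕ) (hn : 3 ≤ n) (d : ℕ → ℝ) (hd : feasible n d) (h1 : d 1 = 0)
    {z : ℝ} (hz : z ∈ Set.Ioo (0:ℝ) 1) :
    aFun n d z ≤ (∑ r ∈ Finset.Icc 1 (n-1), (r : ℝ) * ((n - 1).choose r : ℝ) * d r) * (1 - z) := by
  obtain ⟨hz0, hz1⟩ := hz
  rw [Finset.sum_mul]
  apply Finset.sum_le_sum
  intro r hr
  simp only [Finset.mem_Icc] at hr
  rcases eq_or_lt_of_le hr.1 with heq | hlt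
  · subst heq
    simp [h1]
  · -- 2 ≤ r
    have hdr := hd.1 r (Finset.mem_Icc.mpr hr)
    have hzp : (0:ℝ) ≤ z := hz0.le
    have h1z : (0:ℝ) ≤ 1 - z := by linarith
    have hA : z ^ (n - r - 1) ≤ 1 := pow_le_one₀ hzp hz1.le
    have hB : (1 - z) ^ (r - 1) ≤ (1 - z) ^ 1 :=
      pow_le_pow_of_le_one h1z (by linarith) (by omega)
    have hprod : z ^ (n - r - 1) * (1 - z) ^ (r - 1) ≤ 1 * (1 - z) ^ 1 :=
      mul_le_mul hA hB (by positivity) zero_le_one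
    calc (r : ℝ) * ((n - 1).choose r : ℝ) * z ^ (n - r - 1) * (1 - z) ^ (r - 1) * d r
        = ((r : ℝ) * ((n - 1).choose r : ℝ) * d r) * (z ^ (n - r - 1) * (1 - z) ^ (r - 1)) := by
          ring
      _ ≤ ((r : ℝ) * ((n - 1).choose r : ℝ) * d r) * (1 * (1 - z) ^ 1) := by
          apply mul_le_mul_of_nonneg_left hprod
          positivity
      _ = (r : ℝ) * ((n - 1).choose r : ℝ) * d r * (1 - z) := by ring

/-- Upper bound on `aFun` near `z = 0` when `d (n-1) = 0`. -/
lemma aFun_le_z (n : ℕ) (hn : 3 ≤ n) (d : ℕ → ℝ) (hd : feasible n d) (h1 : d (n-1) = 0)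
    {z : ℝ} (hz : z ∈ Set.Ioo (0:ℝ) 1) :
    aFun n d z ≤ (∑ r ∈ Finset.Icc 1 (n-1), (r : ℝ) * ((n - 1).choose r : ℝ) * d r) * z := by
  obtain ⟨hz0, hz1⟩ := hz
  rw [Finset.sum_mul]
  apply Finset.sum_le_sum
  intro r hr
  simp only [Finset.mem_Icc] at hr
  rcases eq_or_lt_of_le hr.2 with heq | hlt
  · rw [heq]
    simp [h1]
  · -- r ≤ n - 2
    have hdr := hd.1 r (Finset.mem_Icc.mpr hr)
    have hzp : (0:ℝ) ≤ z := hz0.le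
    have h1z : (0:ℝ) ≤ 1 - z := by linarith
    have hA : (1 - z) ^ (r - 1) ≤ 1 := pow_le_one₀ h1z (by linarith)
    have hB : z ^ (n - r - 1) ≤ z ^ 1 :=
      pow_le_pow_of_le_one hzp hz1.le (by omega)
    have hprod : z ^ (n - r - 1) * (1 - z) ^ (r - 1) ≤ z ^ 1 * 1 :=
      mul_le_mul hB hA (by positivity) (by positivity)
    calc (r : ℝ) * ((n - 1).choose r : ℝ) * z ^ (n - r - 1) * (1 - z) ^ (r - 1) * d r
        = ((r : ℝ) * ((n - 1).choose r : ℝ) * d r) * (z ^ (n - r - 1) * (1 - z) ^ (r - 1)) := by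
          ring
      _ ≤ ((r : ℝ) * ((n - 1).choose r : ℝ) * d r) * (z ^ 1 * 1) := by
          apply mul_le_mul_of_nonneg_left hprod
          positivity
      _ = (r : ℝ) * ((n - 1).choose r : ℝ) * d r * z := by ring

/-- For `n ≥ 3` and `d ∈ D`: if `d_1 = 0` then
`ℓ_1(d) = ∫₀¹ (n−1) z^{n−2} / a(z; d) dz = +∞`, and if `d_{n−1} = 0` then
`ℓ_{n−1}(d) = ∫₀¹ (n−1)(1−z)^{n−2} / a(z; d) dz = +∞`. -/
theorem ell_diverges_at_zero_differential (n : ℕ) (hn : 3 ≤ n) (d : ℕ → ℝ)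
    (hd : feasible n d) :
    (d 1 = 0 →
      ellE n d 1 = ⊤ ∧
        (∫⁻ z in Set.Ioo (0:ℝ) 1,
            ENNReal.ofReal (((n : ℝ) - 1) * z ^ (n - 2) / aFun n d z)) = ⊤) ∧
    (d (n - 1) = 0 →
      ellE n d (n - 1) = ⊤ ∧
        (∫⁻ z in Set.Ioo (0:ℝ) 1,
            ENNReal.ofReal (((n : ℝ) - 1) * (1 - z) ^ (n - 2) / aFun n d z)) = ⊤) := by
  set M := ∑ r ∈ Finset.Icc 1 (n-1), (r : ℝ) * ((n - 1).choose r : ℝ) * d r with hMdef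
  have hM : 1 ≤ M := M_pos n d hd
  have hM0 : 0 < M := by linarith
  have hn1 : (0:ℝ) < (n:ℝ) - 1 := by
    have : (3:ℝ) ≤ (n:ℝ) := by exact_mod_cast hn
    linarith
  set K : ℝ := ((n:ℝ) - 1) * (1/2) ^ (n-2) / M with hKdef
  have hK : 0 < K := by positivity
  constructor
  · intro h1
    have T : (∫⁻ z in Set.Ioo (0:ℝ) 1,
        ENNReal.ofReal (((n : ℝ) - 1) * z ^ (n - 2) / aFun n d z)) = ⊤ := by
      rw [eq_top_iff]
      have hsub : Set.Ioo (1/2:ℝ) 1 ⊆ Set.Ioo (0:ℝ) 1 :=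
        Set.Ioo_subset_Ioo (by norm_num) le_rfl
      refine le_trans ?_ (lintegral_mono_set hsub)
      rw [lintegral_top_of_bound measurableSet_Ioo hK
        (f := fun z => (1-z)⁻¹)
        (g := fun z => ((n : ℝ) - 1) * z ^ (n - 2) / aFun n d z) ?_
        lintegral_one_sub_inv_top]
      intro z hz
      obtain ⟨hz0, hz1⟩ := hz
      have hzI : z ∈ Set.Ioo (0:ℝ) 1 := ⟨by linarith, hz1⟩
      have ha := aFun_pos n d hd hzI
      have hub := aFun_le_one_sub n hn d hd h1 hzI
      have h1z : (0:ℝ) < 1 - z := by linarith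
      have hKeq : K * (1-z)⁻¹ = ((n:ℝ) - 1) * (1/2) ^ (n-2) / (M * (1-z)) := by
        rw [hKdef, div_eq_mul_inv _ (M*(1-z)), mul_inv]; ring
      rw [hKeq]
      apply div_le_div₀ (by positivity) ?_ ha hub
      apply mul_le_mul_of_nonneg_left ?_ hn1.le
      exact pow_le_pow_left₀ (by norm_num) hz0.le _
    refine ⟨?_, T⟩
    rw [← T, ellE]
    apply lintegral_congr
    intro z
    congr 1
    have hc1 : ((n-1).choose 1 : ℝ) = (n:ℝ) - 1 := by
      rw [Nat.choose_one_right]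
      have : (1:ℕ) ≤ n := by omega
      push_cast [Nat.cast_sub this]
      ring
    have he : n - 1 - 1 = n - 2 := by omega
    rw [hc1, he]
    push_cast
    ring
  · intro h1
    have T : (∫⁻ z in Set.Ioo (0:ℝ) 1,
        ENNReal.ofReal (((n : ℝ) - 1) * (1 - z) ^ (n - 2) / aFun n d z)) = ⊤ := by
      rw [eq_top_iff]
      have hsub : Set.Ioo (0:ℝ) (1/2) ⊆ Set.Ioo (0:ℝ) 1 :=
        Set.Ioo_subset_Ioo le_rfl (by norm_num)
      refine le_trans ?_ (lintegral_mono_set hsub)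
      rw [lintegral_top_of_bound measurableSet_Ioo hK
        (f := fun z => z⁻¹)
        (g := fun z => ((n : ℝ) - 1) * (1 - z) ^ (n - 2) / aFun n d z) ?_
        (lintegral_inv_Ioo_top (by norm_num))]
      intro z hz
      obtain ⟨hz0, hz1⟩ := hz
      have hzI : z ∈ Set.Ioo (0:ℝ) 1 := ⟨hz0, by linarith⟩
      have ha := aFun_pos n d hd hzI
      have hub := aFun_le_z n hn d hd h1 hzI
      have hKeq : K * z⁻¹ = ((n:ℝ) - 1) * (1/2) ^ (n-2) / (M * z) := by
        rw [hKdef, div_eq_mul_inv _ (M*z), mul_inv]; ring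
      rw [hKeq]
      apply div_le_div₀ (mul_nonneg hn1.le (pow_nonneg (by linarith) _)) ?_ ha hub
      apply mul_le_mul_of_nonneg_left ?_ hn1.le
      exact pow_le_pow_left₀ (by norm_num) (by linarith) _
    refine ⟨?_, T⟩
    rw [← T, ellE]
    apply lintegral_congr
    intro z
    congr 1
    have hc1 : ((n-1).choose (n-1) : ℝ) = 1 := by
      rw [Nat.choose_self]; norm_num
    have he : n - (n-1) - 1 = 0 := by omega
    have he2 : n - 1 - 1 = n - 2 := by omega
    have hcast : ((n - 1 : ℕ) : ℝ) = (n:ℝ) - 1 := by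
      have : (1:ℕ) ≤ n := by omega
      push_cast [Nat.cast_sub this]
      ring
    rw [hc1, he, he2, hcast]
    ring
end
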